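/- arXiv:2107.10334 — 7 statements merged into one kernel-verified Lean document; each statement's English description precedes it below -/
import Mathlib

section
/- For every n ≥ 0, ∑_{i+j+k=n} binom(2i,i) · binom(2j,j) · binom(2k,k) = (2n+1) · binom(2n, n), where the sum is over all triples of nonnegative integers (i,j,k) with i + j + k = n. -/
/-!
Both identities are coefficient identities for `B(x) = ∑ binom(2n,n) xⁿ = (1-4x)^{-1/2}`:
`B² = (1-4x)⁻¹` gives `∑_{i+j=m} binom(2i,i) binom(2j,j) = 4^m`, and then
`B³ = B · (1-4x)⁻¹ = (1-4x)^{-3/2}`. Without power series, both follow from the recurrence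
`(n+1) binom(2n+2,n+1) = 2(2n+1) binom(2n,n)`, which is the coefficient form of
`(1-4x) B' = 2B`. For the square, the weighted sum `W m = ∑_{i+j=m} i·binom(2i,i) binom(2j,j)`
equals `m·S m / 2` by symmetry and `4 W (m-1) + 2 S (m-1)` by the recurrence, where `S m` is the
unweighted sum; together these give `S m = 4 S (m-1)`.
-/

open Finset Nat

namespace Nat

theorem two_mul_sum_antidiagonal_fst_mul_centralBinom_mul (m : ℕ) :
    2 * ∑ p ∈ antidiagonal m, p.1 * (centralBinom p.1 * centralBinom p.2) =
      m * ∑ p ∈ antidiagonal m, centralBinom p.1 * centralBinom p.2 := by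
  rw [two_mul]
  nth_rewrite 2 [← Finset.Nat.sum_antidiagonal_swap]
  rw [← sum_add_distrib, mul_sum]
  refine sum_congr rfl fun p hp => ?_
  rw [← mem_antidiagonal.mp hp, Prod.fst_swap, Prod.snd_swap]
  ring

theorem sum_antidiagonal_succ_fst_mul_centralBinom_mul (m : ℕ) :
    ∑ p ∈ antidiagonal (m + 1), p.1 * (centralBinom p.1 * centralBinom p.2) =
      4 * ∑ p ∈ antidiagonal m, p.1 * (centralBinom p.1 * centralBinom p.2) +
        2 * ∑ p ∈ antidiagonal m, centralBinom p.1 * centralBinom p.2 := by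
  rw [Finset.Nat.sum_antidiagonal_succ, zero_mul, zero_add, mul_sum, mul_sum, ← sum_add_distrib]
  refine sum_congr rfl fun p _ => ?_
  rw [← mul_assoc, succ_mul_centralBinom_succ]
  ring

theorem sum_antidiagonal_centralBinom_mul_centralBinom (m : ℕ) :
    ∑ p ∈ antidiagonal m, centralBinom p.1 * centralBinom p.2 = 4 ^ m := by
  induction m with
  | zero => simp
  | succ m ih =>
    set S := fun m => ∑ p ∈ antidiagonal m, centralBinom p.1 * centralBinom p.2
    set W := fun m => ∑ p ∈ antidiagonal m, p.1 * (centralBinom p.1 * centralBinom p.2)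
    have hsymm (k : ℕ) : 2 * W k = k * S k :=
      two_mul_sum_antidiagonal_fst_mul_centralBinom_mul k
    have hshift : W (m + 1) = 4 * W m + 2 * S m :=
      sum_antidiagonal_succ_fst_mul_centralBinom_mul m
    have hstep : (m + 1) * S (m + 1) = (m + 1) * (4 * S m) := by
      rw [← hsymm, hshift, mul_add, ← mul_assoc, mul_comm 2 4, mul_assoc, hsymm]
      ring
    calc S (m + 1) = 4 * S m := Nat.eq_of_mul_eq_mul_left m.succ_pos hstep
      _ = 4 ^ (m + 1) := by rw [pow_succ, mul_comm, ← ih]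

theorem sum_antidiagonal_centralBinom_mul_four_pow (n : ℕ) :
    ∑ p ∈ antidiagonal n, centralBinom p.1 * 4 ^ p.2 = (2 * n + 1) * centralBinom n := by
  induction n with
  | zero => simp
  | succ n ih =>
    rw [Finset.Nat.sum_antidiagonal_succ']
    simp_rw [pow_succ, ← mul_assoc, ← sum_mul, ih]
    have := succ_mul_centralBinom_succ n
    simp only [pow_zero, mul_one]
    linarith

end Nat

/-- The triple convolution of central binomial coefficients:
`∑_{i+j+k=n} binom(2i,i)·binom(2j,j)·binom(2k,k) = (2n+1)·binom(2n,n)`. -/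
theorem stmt_4 (n : ℕ) :
    ∑ i ∈ Finset.range (n + 1), ∑ j ∈ Finset.range (n + 1 - i),
        Nat.centralBinom i * Nat.centralBinom j * Nat.centralBinom (n - i - j) =
      (2 * n + 1) * Nat.centralBinom n := by
  have hinner : ∀ i ∈ range (n + 1),
      ∑ j ∈ range (n + 1 - i), centralBinom i * centralBinom j * centralBinom (n - i - j) =
        centralBinom i * 4 ^ (n - i) := by
    intro i hi
    have hsucc : n + 1 - i = n - i + 1 := by grind
    rw [hsucc, ← sum_antidiagonal_centralBinom_mul_centralBinom,
      Finset.Nat.sum_antidiagonal_eq_sum_range_succ (fun j k => centralBinom j * centralBinom k),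
      mul_sum]
    exact sum_congr rfl fun j _ => by rw [Nat.sub_sub, mul_assoc]
  rw [sum_congr rfl hinner, ← Finset.Nat.sum_antidiagonal_eq_sum_range_succ
    (fun i j => centralBinom i * 4 ^ j)]
  exact sum_antidiagonal_centralBinom_mul_four_pow n
end

section
/- Let C_n denote the n-th Catalan number and write B_n = binom(2n,n). For all integers p ≥ 1 and q ≥ 1, (p/(p+q)) · binom(2p,p) · binom(2q,q) = 2 · ∑_{j=q}^{p+q-1} C_j · binom(2(p+q-1-j), p+q-1-j). In particular the left-hand side is an integer times a rational expression that equals the manifestly integral right-hand side. -/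
/-! Induction on `p` for all `q` at once: splitting off the term `j = q` of the sum leaves the
sum for `(p, q + 1)`, so it suffices that `T p q := p/(p+q) · B_p · B_q` satisfies
`T (p+1) q = 2 C_q B_p + T p (q+1)`. With `C_q = B_q/(q+1)` and
`B_(n+1) = 2(2n+1)/(n+1) · B_n` this is the polynomial identity
`(2p+1)(q+1) = (p+q+1) + p(2q+1)`; its case `p = 0` is the base of the induction. -/

open Finset Nat

section

variable {K : Type*} [Field K] [CharZero K]

theorem cast_catalan_eq_centralBinom_div (n : ℕ) :
    (catalan n : K) = centralBinom n / (n + 1) := by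
  rw [eq_div_iff (Nat.cast_add_one_ne_zero n), mul_comm]
  exact_mod_cast succ_mul_catalan_eq_centralBinom n

theorem cast_centralBinom_succ (n : ℕ) :
    (centralBinom (n + 1) : K) = 2 * (2 * n + 1) * centralBinom n / (n + 1) := by
  rw [eq_div_iff (Nat.cast_add_one_ne_zero n), mul_comm]
  exact_mod_cast succ_mul_centralBinom_succ n

theorem div_mul_centralBinom_mul_centralBinom_succ_left (p q : ℕ) :
    ((p + 1 : K) / (p + 1 + q)) * centralBinom (p + 1) * centralBinom q =
      2 * catalan q * centralBinom p +
        (p / (p + (q + 1))) * centralBinom p * centralBinom (q + 1) := by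
  rw [cast_catalan_eq_centralBinom_div, cast_centralBinom_succ, cast_centralBinom_succ]
  have h₁ : (p + 1 + q : K) ≠ 0 := by norm_cast; omega
  have h₂ : (p + (q + 1) : K) ≠ 0 := by norm_cast
  field_simp
  ring

theorem div_mul_centralBinom_mul_centralBinom_eq_two_mul_sum (n q : ℕ) :
    ((n + 1 : K) / (n + 1 + q)) * centralBinom (n + 1) * centralBinom q =
      2 * ∑ j ∈ Icc q (n + q), (catalan j : K) * centralBinom (n + q - j) := by
  induction n generalizing q with
  | zero =>
    simpa using div_mul_centralBinom_mul_centralBinom_succ_left (K := K) 0 q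
  | succ n ih =>
    rw [Icc_eq_cons_Ioc (by omega), sum_cons, ← Icc_add_one_left_eq_Ioc, mul_add,
      Nat.add_sub_cancel, show n + 1 + q = n + (q + 1) by omega, ← ih (q + 1)]
    have step := div_mul_centralBinom_mul_centralBinom_succ_left (K := K) (n + 1) q
    push_cast at step ⊢
    linear_combination step

end

theorem stmt_7_general (p q : ℕ) (hp : 1 ≤ p) :
    ((p : ℚ) / (p + q)) * Nat.centralBinom p * Nat.centralBinom q =
      2 * ∑ j ∈ Finset.Icc q (p + q - 1),
        (catalan j : ℚ) * Nat.centralBinom (p + q - 1 - j) := by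
  obtain ⟨n, rfl⟩ := Nat.exists_eq_add_of_le' hp
  rw [show n + 1 + q - 1 = n + q by omega]
  push_cast
  exact div_mul_centralBinom_mul_centralBinom_eq_two_mul_sum n q

/-- For `p, q ≥ 1`,
`(p/(p+q))·binom(2p,p)·binom(2q,q) = 2·∑_{j=q}^{p+q-1} Cⱼ·binom(2(p+q-1-j), p+q-1-j)`. -/
theorem stmt_7 (p q : ℕ) (hp : 1 ≤ p) (hq : 1 ≤ q) :
    ((p : ℚ) / (p + q)) * Nat.centralBinom p * Nat.centralBinom q =
      2 * ∑ j ∈ Finset.Icc q (p + q - 1),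
        (catalan j : ℚ) * Nat.centralBinom (p + q - 1 - j) :=
  stmt_7_general p q hp
end

section
/- Define A(p,q) = p·q/(2(p+q)) · binom(2p,p) · binom(2q,q) for integers p, q ≥ 1, and let C_n be the n-th Catalan number. Then for all p ≥ 1 and q ≥ 1, A(p+1, q) = 2·∑_{i=0}^{p-1} C_i · A(p-i, q) + q · C_{p+q}. -/
/-- `A p q = p·q/(2(p+q)) · binom(2p,p) · binom(2q,q)`, the number of clusters of
the affine `A_{p,q}` cluster algebra up to the Dehn twist `γ`. -/
noncomputable def affineACount (p q : ℕ) : ℚ :=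
  ((p : ℚ) * q / (2 * ((p : ℚ) + q))) * Nat.centralBinom p * Nat.centralBinom q

open Finset Nat

/-!
Write `B n` for `centralBinom n`, `C n` for `catalan n` and `H m q = B m * B q / (m + q)`.
Then `2 A(m,q) = q (B m * B q - q H(m,q))`, and the summand `i = p` may be added since
`A(0,q) = 0`. The sum thus splits into two Catalan convolutions:
`2 ∑_{i ≤ n} C i * B (n - i) = B (n + 1)`, and
`q ∑_{i ≤ p} C i * H(p - i, q) = q H(p + 1, q) / 2 + C (p + q)` for `q ≠ 0`. The latter follows
by induction on `p` for all `q` at once from `q H(m + 1, q) + 2 C m * B q = (q + 1) H(m, q + 1)`,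
whose coefficients do not depend on `m`.
-/

theorem centralBinom_succ_eq_mul_catalan (n : ℕ) :
    centralBinom (n + 1) = 2 * (2 * n + 1) * catalan n := by
  apply Nat.eq_of_mul_eq_mul_left n.succ_pos
  rw [succ_mul_centralBinom_succ, ← succ_mul_catalan_eq_centralBinom, succ_eq_add_one]
  ring

theorem centralBinom_succ_add_two_mul_catalan (n : ℕ) :
    centralBinom (n + 1) + 2 * catalan n = 4 * centralBinom n := by
  rw [centralBinom_succ_eq_mul_catalan, ← succ_mul_catalan_eq_centralBinom]
  ring

theorem catalan_succ_eq_sum_range (n : ℕ) :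
    catalan (n + 1) = ∑ i ∈ range (n + 1), catalan i * catalan (n - i) := by
  rw [catalan_succ, Fin.sum_univ_eq_sum_range (fun i => catalan i * catalan (n - i))]

theorem two_mul_sum_catalan_mul_centralBinom (n : ℕ) :
    2 * ∑ i ∈ range (n + 1), catalan i * centralBinom (n - i) = centralBinom (n + 1) := by
  induction n with
  | zero => simp [centralBinom]
  | succ n ih =>
    have hshift : ∑ i ∈ range (n + 1), catalan i * centralBinom (n + 1 - i)
        + 2 * catalan (n + 1) = 2 * centralBinom (n + 1) := by
      rw [catalan_succ_eq_sum_range, mul_sum, ← sum_add_distrib, ← ih, mul_sum, mul_sum]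
      refine sum_congr rfl fun i hi => ?_
      rw [show n + 1 - i = n - i + 1 by have := mem_range.mp hi; omega]
      linear_combination catalan i * centralBinom_succ_add_two_mul_catalan (n - i)
    have hstep := centralBinom_succ_add_two_mul_catalan (n + 1)
    rw [sum_range_succ, Nat.sub_self, centralBinom_zero]
    omega

noncomputable def centralBinomDiv (m q : ℕ) : ℚ :=
  centralBinom m * centralBinom q / (m + q)

theorem centralBinomDiv_succ_left (m q : ℕ) :
    q * centralBinomDiv (m + 1) q + 2 * catalan m * centralBinom q =
      (q + 1) * centralBinomDiv m (q + 1) := by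
  have hB : ∀ n, (centralBinom n : ℚ) = (n + 1) * catalan n := fun n => by
    exact_mod_cast (succ_mul_catalan_eq_centralBinom n).symm
  have hBsucc : ∀ n, (centralBinom (n + 1) : ℚ) = 2 * (2 * n + 1) * catalan n := fun n => by
    exact_mod_cast centralBinom_succ_eq_mul_catalan n
  unfold centralBinomDiv
  rw [hBsucc m, hBsucc q, hB m, hB q]
  push_cast
  field_simp
  ring

theorem mul_centralBinomDiv_zero_left {q : ℕ} (hq : q ≠ 0) :
    q * centralBinomDiv 0 q = centralBinom q := by
  unfold centralBinomDiv
  rw [centralBinom_zero, Nat.cast_one, Nat.cast_zero, zero_add, one_mul]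
  field_simp

theorem sum_catalan_mul_centralBinomDiv (p : ℕ) {q : ℕ} (hq : q ≠ 0) :
    q * ∑ i ∈ range (p + 1), catalan i * centralBinomDiv (p - i) q =
      q * centralBinomDiv (p + 1) q / 2 + catalan (p + q) := by
  induction p generalizing q with
  | zero =>
    simp only [zero_add, sum_range_one, catalan_zero, Nat.cast_one, one_mul]
    rw [mul_centralBinomDiv_zero_left hq]
    unfold centralBinomDiv
    rw [← succ_mul_catalan_eq_centralBinom q, show centralBinom 1 = 2 from rfl]
    push_cast
    field_simp
    ring
  | succ p ih =>
    have hterm : ∀ i ∈ range (p + 1),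
        (q : ℚ) * (catalan i * centralBinomDiv (p + 1 - i) q) =
          (q + 1) * (catalan i * centralBinomDiv (p - i) (q + 1)) -
            2 * centralBinom q * (catalan i * catalan (p - i)) := fun i hi => by
      rw [show p + 1 - i = p - i + 1 by have := mem_range.mp hi; omega]
      linear_combination (catalan i : ℚ) * centralBinomDiv_succ_left (p - i) q
    have hcat : (catalan (p + 1) : ℚ) =
        ∑ i ∈ range (p + 1), (catalan i : ℚ) * catalan (p - i) := by
      exact_mod_cast catalan_succ_eq_sum_range p
    have hrec := centralBinomDiv_succ_left (p + 1) q
    have hih := ih (q := q + 1) (succ_ne_zero q)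
    push_cast at hih hrec
    rw [sum_range_succ, mul_add, mul_sum, sum_congr rfl hterm, sum_sub_distrib, ← mul_sum,
      ← mul_sum, ← hcat, Nat.sub_self, mul_left_comm, mul_centralBinomDiv_zero_left hq,
      show p + 1 + q = p + (q + 1) by omega]
    linear_combination hih - hrec / 2

theorem two_mul_affineACount (m q : ℕ) :
    2 * affineACount m q = q * (centralBinom m * centralBinom q - q * centralBinomDiv m q) := by
  unfold affineACount centralBinomDiv
  rcases eq_or_ne ((m : ℚ) + q) 0 with h | h
  · obtain ⟨rfl, rfl⟩ : m = 0 ∧ q = 0 := by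
      have : m + q = 0 := by exact_mod_cast h
      omega
    simp
  · field_simp
    ring

theorem stmt_9_general (p q : ℕ) :
    affineACount (p + 1) q =
      2 * ∑ i ∈ Finset.range p, (catalan i : ℚ) * affineACount (p - i) q +
        (q : ℚ) * catalan (p + q) := by
  rcases eq_or_ne q 0 with rfl | hq
  · simp [affineACount]
  have hsummand : ∀ i ∈ range (p + 1), (catalan i : ℚ) * affineACount (p - i) q =
      q * centralBinom q / 2 * (catalan i * centralBinom (p - i)) -
        q ^ 2 / 2 * (catalan i * centralBinomDiv (p - i) q) := fun i _ => by
    linear_combination (catalan i : ℚ) / 2 * two_mul_affineACount (p - i) q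
  have hconv : 2 * ∑ i ∈ range (p + 1), (catalan i : ℚ) * centralBinom (p - i) =
      centralBinom (p + 1) := by
    exact_mod_cast two_mul_sum_catalan_mul_centralBinom p
  have hconvDiv := sum_catalan_mul_centralBinomDiv p hq
  have hextend : ∑ i ∈ range p, (catalan i : ℚ) * affineACount (p - i) q =
      ∑ i ∈ range (p + 1), (catalan i : ℚ) * affineACount (p - i) q := by
    rw [sum_range_succ, Nat.sub_self, show affineACount 0 q = 0 by simp [affineACount],
      mul_zero, add_zero]
  rw [hextend, sum_congr rfl hsummand, sum_sub_distrib, ← mul_sum, ← mul_sum]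
  linear_combination
    two_mul_affineACount (p + 1) q / 2 - q * centralBinom q / 2 * hconv + q * hconvDiv

/-- The recurrence `A(p+1,q) = 2·∑_{i=0}^{p-1} Cᵢ·A(p-i,q) + q·C_{p+q}`. -/
theorem stmt_9 (p q : ℕ) (hp : 1 ≤ p) (hq : 1 ≤ q) :
    affineACount (p + 1) q =
      2 * ∑ i ∈ Finset.range p, (catalan i : ℚ) * affineACount (p - i) q +
        (q : ℚ) * catalan (p + q) :=
  stmt_9_general p q
end

section
/- Define D_0 = 1 and D_n = (3n-2)/n · binom(2n-2, n-1) for n ≥ 1, and define D̃_n = 9(n-2)·binom(2(n-2), n-2) for n ≥ 3. Let C_i be the i-th Catalan number. Then for every n ≥ 3, D̃_{n+1} = 2·∑_{i=0}^{n-3} C_i · D̃_{n-i} + 2·∑_{j=0}^{n} D_j · D_{n-j}. -/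
/-!
Write `Cₖ` for the Catalan numbers and `Bₖ = (k+1) Cₖ` for the central binomial coefficients.
Then `D_{k+1} = (3k+1) Cₖ` and `D̃_{k+2} = 9 k Bₖ`, so for `n = m + 2` both sums become Catalan
convolutions `∑_{i+j=m} w(i,j) Cᵢ Cⱼ` with polynomial weights of degree at most two. These are
evaluated by three moments: `∑ Cᵢ Cⱼ = C_{m+1}` (the Catalan recursion), `2 ∑ i Cᵢ Cⱼ = m C_{m+1}`
(symmetry `i ↔ j`), and `∑ i j Cᵢ Cⱼ + (m+1) C_{m+1} = 4^m`, which is the classical identity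
`∑_{i+j=m} Bᵢ Bⱼ = 4^m` rewritten via `(i+1)(j+1) = i j + m + 1`.
-/

/-- `D n` : the number of clusters of the finite type `Dₙ` cluster algebra,
with `D 0 = 1` and `D n = (3n-2)/n · binom(2n-2, n-1)` for `n ≥ 1`. -/
noncomputable def finiteDCount (n : ℕ) : ℚ :=
  if n = 0 then 1 else ((3 * (n : ℚ) - 2) / n) * Nat.centralBinom (n - 1)

/-- `D̃ n = 9(n-2)·binom(2(n-2), n-2)` : the number of clusters of the affine
`Dₙ` cluster algebra up to the Dehn twist `γ` (for `n ≥ 3`). -/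
def affineDCount (n : ℕ) : ℚ :=
  9 * ((n : ℚ) - 2) * Nat.centralBinom (n - 2)

open Finset

theorem two_mul_sum_antidiagonal_fst_mul {R : Type*} [CommSemiring R] (f : ℕ → R) (m : ℕ) :
    2 * ∑ p ∈ antidiagonal m, (p.1 : R) * (f p.1 * f p.2) =
      m * ∑ p ∈ antidiagonal m, f p.1 * f p.2 := by
  have hswap : ∑ p ∈ antidiagonal m, (p.1 : R) * (f p.1 * f p.2) =
      ∑ p ∈ antidiagonal m, (p.2 : R) * (f p.1 * f p.2) := by
    rw [← Nat.sum_antidiagonal_swap]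
    refine sum_congr rfl fun p _ => ?_
    simp only [Prod.fst_swap, Prod.snd_swap]
    ring
  rw [two_mul]
  nth_rewrite 2 [hswap]
  rw [← sum_add_distrib, mul_sum]
  refine sum_congr rfl fun p hp => ?_
  rw [← mem_antidiagonal.mp hp]
  push_cast
  ring

theorem sum_antidiagonal_centralBinom_mul (m : ℕ) :
    ∑ p ∈ antidiagonal m, p.1.centralBinom * p.2.centralBinom = 4 ^ m := by
  induction m with
  | zero => simp
  | succ m ih =>
    have hsym (k : ℕ) := two_mul_sum_antidiagonal_fst_mul Nat.centralBinom k
    simp only [Nat.cast_id] at hsym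
    -- `(k+1) B_{k+1} = 2(2k+1) Bₖ` turns the first moment at `m + 1` into moments at `m`.
    have hshift : ∑ p ∈ antidiagonal (m + 1), p.1 * (p.1.centralBinom * p.2.centralBinom) =
        ∑ p ∈ antidiagonal m, (4 * (p.1 * (p.1.centralBinom * p.2.centralBinom)) +
          2 * (p.1.centralBinom * p.2.centralBinom)) := by
      rw [Nat.sum_antidiagonal_succ, zero_mul, zero_add]
      refine sum_congr rfl fun p _ => ?_
      rw [← mul_assoc, Nat.succ_mul_centralBinom_succ]
      ring
    rw [sum_add_distrib, ← mul_sum, ← mul_sum] at hshift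
    refine Nat.eq_of_mul_eq_mul_left m.add_one_pos ?_
    linear_combination 2 * hshift + 4 * hsym m + (4 * m + 4) * ih - hsym (m + 1)

theorem two_mul_sum_antidiagonal_fst_mul_catalan (m : ℕ) :
    2 * ∑ p ∈ antidiagonal m, p.1 * (catalan p.1 * catalan p.2) = m * catalan (m + 1) := by
  simpa [← catalan_succ'] using two_mul_sum_antidiagonal_fst_mul catalan m

theorem sum_antidiagonal_fst_mul_snd_mul_catalan (m : ℕ) :
    ∑ p ∈ antidiagonal m, p.1 * p.2 * (catalan p.1 * catalan p.2) + (m + 1) * catalan (m + 1) =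
      4 ^ m := by
  rw [← sum_antidiagonal_centralBinom_mul, catalan_succ', mul_sum, ← sum_add_distrib]
  refine sum_congr rfl fun p hp => ?_
  rw [← succ_mul_catalan_eq_centralBinom, ← succ_mul_catalan_eq_centralBinom,
    ← mem_antidiagonal.mp hp]
  ring

theorem two_mul_sum_antidiagonal_catalan_mul_snd_mul_centralBinom (m : ℕ) :
    2 * ∑ p ∈ antidiagonal m, catalan p.1 * (p.2 * p.2.centralBinom) + 2 * 4 ^ m =
      (m + 1) * (m + 1).centralBinom := by
  have hswap : ∑ p ∈ antidiagonal m, catalan p.1 * (p.2 * p.2.centralBinom) =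
      ∑ p ∈ antidiagonal m, catalan p.2 * (p.1 * p.1.centralBinom) := by
    rw [← Nat.sum_antidiagonal_swap]
    rfl
  have hsplit : ∑ p ∈ antidiagonal m, catalan p.1 * (p.2 * p.2.centralBinom) +
      ∑ p ∈ antidiagonal m, p.1 * p.2 * (catalan p.1 * catalan p.2) =
        (m + 1) * ∑ p ∈ antidiagonal m, p.1 * (catalan p.1 * catalan p.2) := by
    rw [hswap, mul_sum, ← sum_add_distrib]
    refine sum_congr rfl fun p hp => ?_
    rw [← succ_mul_catalan_eq_centralBinom, ← mem_antidiagonal.mp hp]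
    ring
  have hfst := two_mul_sum_antidiagonal_fst_mul_catalan m
  have hprod := sum_antidiagonal_fst_mul_snd_mul_catalan m
  have hbinom := succ_mul_catalan_eq_centralBinom (m + 1)
  linear_combination 2 * hsplit + (m + 1) * hfst - 2 * hprod + (m + 1) * hbinom

theorem finiteDCount_zero : finiteDCount 0 = 1 := if_pos rfl

theorem finiteDCount_succ (k : ℕ) : finiteDCount (k + 1) = (3 * k + 1) * catalan k := by
  rw [finiteDCount, if_neg k.succ_ne_zero, Nat.add_sub_cancel,
    ← succ_mul_catalan_eq_centralBinom]
  push_cast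
  field_simp
  ring

theorem sum_antidiagonal_finiteDCount_mul (m : ℕ) :
    ∑ p ∈ antidiagonal (m + 2), finiteDCount p.1 * finiteDCount p.2 = 9 * 4 ^ m := by
  rw [Nat.sum_antidiagonal_succ, Nat.sum_antidiagonal_succ']
  simp only [finiteDCount_zero, finiteDCount_succ]
  have hprod : ∑ p ∈ antidiagonal m, (p.1 : ℚ) * p.2 * (catalan p.1 * catalan p.2) +
      (m + 1) * catalan (m + 1) = 4 ^ m := by
    exact_mod_cast sum_antidiagonal_fst_mul_snd_mul_catalan m
  have hsum : ∑ p ∈ antidiagonal m,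
      (3 * (p.1 : ℚ) + 1) * catalan p.1 * ((3 * (p.2 : ℚ) + 1) * catalan p.2) =
        9 * ∑ p ∈ antidiagonal m, (p.1 : ℚ) * p.2 * (catalan p.1 * catalan p.2) +
          (3 * m + 1) * catalan (m + 1) := by
    rw [catalan_succ', Nat.cast_sum, mul_sum, mul_sum, ← sum_add_distrib]
    refine sum_congr rfl fun p hp => ?_
    rw [← mem_antidiagonal.mp hp]
    push_cast
    ring
  rw [hsum]
  push_cast
  linear_combination 9 * hprod

theorem affineDCount_add_two (k : ℕ) : affineDCount (k + 2) = 9 * k * k.centralBinom := by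
  simp [affineDCount]

theorem sum_range_catalan_mul_affineDCount (m : ℕ) :
    ∑ i ∈ range m, (catalan i : ℚ) * affineDCount (m + 2 - i) =
      9 * ∑ p ∈ antidiagonal m, (catalan p.1 : ℚ) * (p.2 * p.2.centralBinom) := by
  rw [Nat.sum_antidiagonal_eq_sum_range_succ_mk, sum_range_succ, Nat.sub_self]
  simp only [Nat.cast_zero, zero_mul, mul_zero, add_zero]
  rw [mul_sum]
  refine sum_congr rfl fun i hi => ?_
  rw [show m + 2 - i = m - i + 2 by have := mem_range.mp hi; omega, affineDCount_add_two]
  ring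

/-- The recurrence `D̃_{n+1} = 2·∑_{i=0}^{n-3} Cᵢ·D̃_{n-i} + 2·∑_{j=0}^{n} Dⱼ·D_{n-j}`. -/
theorem stmt_11 (n : ℕ) (hn : 3 ≤ n) :
    affineDCount (n + 1) =
      2 * ∑ i ∈ Finset.range (n - 2), (catalan i : ℚ) * affineDCount (n - i) +
        2 * ∑ j ∈ Finset.range (n + 1), finiteDCount j * finiteDCount (n - j) := by
  obtain ⟨m, rfl⟩ : ∃ m, n = m + 2 := ⟨n - 2, by omega⟩
  rw [Nat.add_sub_cancel, sum_range_catalan_mul_affineDCount,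
    ← Nat.sum_antidiagonal_eq_sum_range_succ (fun i j => finiteDCount i * finiteDCount j),
    sum_antidiagonal_finiteDCount_mul, show m + 2 + 1 = m + 1 + 2 by rfl, affineDCount_add_two]
  have key : 2 * ∑ p ∈ antidiagonal m, (catalan p.1 : ℚ) * (p.2 * p.2.centralBinom) +
      2 * 4 ^ m = (m + 1) * (m + 1).centralBinom := by
    exact_mod_cast two_mul_sum_antidiagonal_catalan_mul_snd_mul_centralBinom m
  push_cast
  linear_combination (-9) * key
end

section
/- In the braid group B_3 = ⟨a, b | aba = bab⟩, the subgroup generated by a and b^2 is isomorphic to the Artin–Tits group of type B_2, i.e. to ⟨x, y | xyxy = yxyx⟩, via x ↦ a, y ↦ b^2. -/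
/-- The single braid relation `aba = bab` defining the braid group `B₃`. -/
def braidRelA2 : Set (FreeGroup (Fin 2)) :=
  {FreeGroup.of 0 * FreeGroup.of 1 * FreeGroup.of 0 *
    (FreeGroup.of 1 * FreeGroup.of 0 * FreeGroup.of 1)⁻¹}

/-- The relation `xyxy = yxyx` defining the Artin–Tits group of type `B₂`. -/
def braidRelB2 : Set (FreeGroup (Fin 2)) :=
  {FreeGroup.of 0 * FreeGroup.of 1 * FreeGroup.of 0 * FreeGroup.of 1 *
    (FreeGroup.of 1 * FreeGroup.of 0 * FreeGroup.of 1 * FreeGroup.of 0)⁻¹}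

open PresentedGroup

lemma pg_rel_one {α : Type*} {rels : Set (FreeGroup α)} {r : FreeGroup α} (h : r ∈ rels) :
    PresentedGroup.mk rels r = 1 :=
  (QuotientGroup.eq_one_iff r).2 (Subgroup.subset_normalClosure h)

lemma hA2 : (of 0 * of 1 * of 0 : PresentedGroup braidRelA2) = of 1 * of 0 * of 1 := by
  have h := pg_rel_one (rels := braidRelA2) (r := FreeGroup.of 0 * FreeGroup.of 1 * FreeGroup.of 0 *
    (FreeGroup.of 1 * FreeGroup.of 0 * FreeGroup.of 1)⁻¹) rfl
  rw [map_mul, map_inv, map_mul, map_mul, map_mul, map_mul, mul_inv_eq_one] at h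
  exact h

lemma hB2 : (of 0 * of 1 * of 0 * of 1 : PresentedGroup braidRelB2) = of 1 * of 0 * of 1 * of 0 := by
  have h := pg_rel_one (rels := braidRelB2) (r := FreeGroup.of 0 * FreeGroup.of 1 * FreeGroup.of 0 * FreeGroup.of 1 *
    (FreeGroup.of 1 * FreeGroup.of 0 * FreeGroup.of 1 * FreeGroup.of 0)⁻¹) rfl
  rw [map_mul, map_inv] at h
  rw [mul_inv_eq_one] at h
  simp only [map_mul] at h
  exact h

/-- key identity in B₃ : `a b² a b² = b² a b² a`. -/
lemma hb2 : ((of 0) * (of 1)^2 * (of 0) * (of 1)^2 : PresentedGroup braidRelA2)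
    = (of 1)^2 * (of 0) * (of 1)^2 * (of 0) := by
  set a : PresentedGroup braidRelA2 := of 0
  set b : PresentedGroup braidRelA2 := of 1
  have h : a * b * a = b * a * b := hA2
  calc a * b^2 * a * b^2 = a*b*(b*a*b)*b := by rw [pow_two]; group
    _ = a*b*(a*b*a)*b := by rw [← h]
    _ = (a*b*a)*(b*a*b) := by group
    _ = (a*b*a)*(a*b*a) := by rw [← h]
    _ = ((a*b*a)*a)*b*a := by group
    _ = ((b*a*b)*a)*b*a := by rw [h]
    _ = b*(a*b*a)*b*a := by group
    _ = b*(b*a*b)*b*a := by rw [h]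
    _ = b^2*a*b^2*a := by rw [pow_two]; group

/-- the map `x ↦ a`, `y ↦ b²`. -/
noncomputable def phi0 : PresentedGroup braidRelB2 →* PresentedGroup braidRelA2 :=
  PresentedGroup.toGroup (f := ![of 0, (of 1)^2]) (by
    intro r hr
    rw [braidRelB2, Set.mem_singleton_iff] at hr
    subst hr
    simp only [map_mul, map_inv, FreeGroup.lift_apply_of, Matrix.cons_val_zero, Matrix.cons_val_one,
      Matrix.head_cons, mul_inv_eq_one]
    exact hb2)

@[simp] lemma phi0_of0 : phi0 (of 0) = of 0 := by
  simp [phi0, PresentedGroup.toGroup.of]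

@[simp] lemma phi0_of1 : phi0 (of 1) = (of 1)^2 := by
  simp [phi0, PresentedGroup.toGroup.of]

/-- The central element `c = (xy)² = xyxy` of the B₂ Artin group. -/
noncomputable def cc : PresentedGroup braidRelB2 := of 0 * of 1 * of 0 * of 1

lemma comm_cc (g : PresentedGroup braidRelB2) : cc * g = g * cc := by
  have hg : g ∈ Subgroup.centralizer {cc} := by
    refine PresentedGroup.generated_by _ _ ?_ g
    intro j
    rw [Subgroup.mem_centralizer_iff]
    intro h hh
    rw [Set.mem_singleton_iff] at hh
    subst hh
    set x : PresentedGroup braidRelB2 := of 0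
    set y : PresentedGroup braidRelB2 := of 1
    have h2 : x * y * x * y = y * x * y * x := hB2
    fin_cases j
    · show cc * x = x * cc
      calc cc * x = (x*y*x*y)*x := rfl
        _ = x*(y*x*y*x) := by group
        _ = x*(x*y*x*y) := by rw [← h2]
        _ = x * cc := by rw [cc]
    · show cc * y = y * cc
      calc cc * y = (y*x*y*x)*y := by rw [cc, h2]
        _ = y*(x*y*x*y) := by group
        _ = y * cc := rfl
  exact Subgroup.mem_centralizer_iff.1 hg cc rfl

lemma comm_cc2 (g : PresentedGroup braidRelB2) (k : ℤ) : g * cc ^ k = cc ^ k * g := (Commute.zpow_right (show Commute g cc from (comm_cc g).symm) k).eq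


/-- subgroup generated by the central element -/
noncomputable def NN : Subgroup (PresentedGroup braidRelB2) := Subgroup.zpowers cc

instance : NN.Normal := by
  constructor
  intro n hn g
  obtain ⟨k, rfl⟩ := Subgroup.mem_zpowers_iff.1 hn
  have : g * cc ^ k * g⁻¹ = cc ^ k := by rw [comm_cc2, mul_assoc, mul_inv_cancel, mul_one]
  rw [this]
  exact Subgroup.zpow_mem _ (Subgroup.mem_zpowers cc) k

/-- The family `ℤ`, `ZMod 2` for the free product. -/
def Hfam : Bool → Type
  | false => Multiplicative ℤ
  | true => Multiplicative (ZMod 2)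

instance : (b : Bool) → Group (Hfam b)
  | false => inferInstanceAs (Group (Multiplicative ℤ))
  | true => inferInstanceAs (Group (Multiplicative (ZMod 2)))

/-- generator of the ℤ factor -/
def XX : Monoid.CoprodI Hfam := Monoid.CoprodI.of (i := false) (Multiplicative.ofAdd (1 : ℤ))
/-- generator of the ZMod 2 factor -/
def UU : Monoid.CoprodI Hfam := Monoid.CoprodI.of (i := true) (Multiplicative.ofAdd (1 : ZMod 2))

lemma UU_sq : UU * UU = 1 := by
  have h1 : (Multiplicative.ofAdd (1 : ZMod 2) * Multiplicative.ofAdd (1 : ZMod 2) : Hfam true) = 1 := by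
    rfl
  erw [UU, ← map_mul]
  exact (congrArg (fun t : Hfam true => (Monoid.CoprodI.of (i := true) t : Monoid.CoprodI Hfam)) h1).trans
    (map_one _)

/-- the map `x ↦ X`, `y ↦ X⁻¹ U` to the free product. -/
noncomputable def pp : PresentedGroup braidRelB2 →* Monoid.CoprodI Hfam :=
  PresentedGroup.toGroup (f := ![XX, XX⁻¹ * UU]) (by
    intro r hr
    rw [braidRelB2, Set.mem_singleton_iff] at hr
    subst hr
    simp only [map_mul, map_inv, FreeGroup.lift_apply_of, Matrix.cons_val_zero, Matrix.cons_val_one,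
      Matrix.head_cons, mul_inv_eq_one]
    calc XX * (XX⁻¹ * UU) * XX * (XX⁻¹ * UU) = UU * UU := by group
      _ = XX⁻¹ * ((UU * UU) * XX) := by rw [UU_sq]; group
      _ = (XX⁻¹ * UU) * XX * (XX⁻¹ * UU) * XX := by group)

@[simp] lemma pp_of0 : pp (of 0) = XX := by simp [pp, PresentedGroup.toGroup.of]
@[simp] lemma pp_of1 : pp (of 1) = XX⁻¹ * UU := by simp [pp, PresentedGroup.toGroup.of]

/-- Build a hom from `Multiplicative (ZMod 2)` out of an element of order dividing 2. -/
def homC2 {M : Type*} [Monoid M] (m : M) (h : m * m = 1) : Multiplicative (ZMod 2) →* M where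
  toFun g := m ^ (Multiplicative.toAdd g).val
  map_one' := by simp
  map_mul' a b := by
    have key : ∀ x y : ZMod 2, m ^ (x + y).val = m ^ x.val * m ^ y.val := by
      intro x y
      have e1 : ((1 : ZMod 2) + 1) = 0 := rfl
      have e2 : ZMod.val (0 : ZMod 2) = 0 := rfl
      have e3 : ZMod.val (1 : ZMod 2) = 1 := rfl
      fin_cases x <;> fin_cases y
      · show m ^ 0 = m ^ 0 * m ^ 0; simp
      · show m ^ 1 = m ^ 0 * m ^ 1; simp
      · show m ^ 1 = m ^ 1 * m ^ 0; simp
      · show m ^ 0 = m ^ 1 * m ^ 1; simp [h]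
    show m ^ (Multiplicative.toAdd a + Multiplicative.toAdd b).val = _
    exact key _ _

@[simp] lemma homC2_apply_ofAdd_one {M : Type*} [Monoid M] (m : M) (h : m * m = 1) :
    homC2 m h (Multiplicative.ofAdd (1 : ZMod 2)) = m := by
  show m ^ (ZMod.val (1 : ZMod 2)) = m
  rw [show ZMod.val (1 : ZMod 2) = 1 from rfl, pow_one]

lemma mm_sq : (QuotientGroup.mk' NN) (of 0 * of 1) * (QuotientGroup.mk' NN) (of 0 * of 1) = 1 := by
  rw [← map_mul, show ((of 0 * of 1) * (of 0 * of 1) : PresentedGroup braidRelB2) = cc by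
    rw [cc]; group]
  exact (QuotientGroup.eq_one_iff cc).2 (Subgroup.mem_zpowers cc)

noncomputable def sigmaFam : (b : Bool) → Hfam b →* (PresentedGroup braidRelB2 ⧸ NN)
  | false => zpowersHom _ (QuotientGroup.mk' NN (of 0))
  | true => homC2 _ mm_sq

noncomputable def sigma' : Monoid.CoprodI Hfam →* (PresentedGroup braidRelB2 ⧸ NN) :=
  Monoid.CoprodI.lift sigmaFam

lemma sigma_pp : sigma'.comp pp = QuotientGroup.mk' NN := by
  apply PresentedGroup.ext
  intro x
  fin_cases x
  · show sigma' (pp (of 0)) = _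
    rw [pp_of0, XX, sigma']
    show QuotientGroup.mk' NN (of 0) ^ (1 : ℤ) = _
    rw [zpow_one]
    rfl
  · show sigma' (pp (of 1)) = _
    rw [pp_of1, map_mul, map_inv, sigma', XX, UU]
    show (QuotientGroup.mk' NN (of 0) ^ (1 : ℤ))⁻¹ *
      QuotientGroup.mk' NN (of 0 * of 1) ^ (ZMod.val (1 : ZMod 2)) = _
    rw [zpow_one, show ZMod.val (1 : ZMod 2) = 1 from rfl, pow_one, ← map_inv, ← map_mul,
      show ((fun i => i) (⟨1, by norm_num⟩ : Fin 2)) = (1 : Fin 2) from rfl]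
    congr 1
    group

open ModularGroup in
noncomputable def Bmat : Matrix.SpecialLinearGroup (Fin 2) ℤ :=
  ⟨!![1, 0; -1, 1], by norm_num [Matrix.det_fin_two_of]⟩

noncomputable def Umat : Matrix.SpecialLinearGroup (Fin 2) ℤ :=
  ⟨!![-1, 1; -2, 1], by norm_num [Matrix.det_fin_two_of]⟩

open ModularGroup in
lemma braid_mat : T * Bmat * T = Bmat * T * Bmat := by
  apply Subtype.ext
  simp only [Matrix.SpecialLinearGroup.coe_mul]
  simp [Bmat, ModularGroup.coe_T, Matrix.SpecialLinearGroup.coe_mul, Matrix.mul_fin_two]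

open ModularGroup in
lemma Umat_eq : T * Bmat ^ 2 = Umat := by
  apply Subtype.ext
  rw [pow_two]
  simp only [Matrix.SpecialLinearGroup.coe_mul]
  simp [Bmat, Umat, ModularGroup.coe_T, Matrix.SpecialLinearGroup.coe_mul, Matrix.mul_fin_two]

open ModularGroup in
noncomputable def rho : PresentedGroup braidRelA2 →* Matrix.SpecialLinearGroup (Fin 2) ℤ :=
  PresentedGroup.toGroup (f := ![T, Bmat]) (by
    intro r hr
    rw [braidRelA2, Set.mem_singleton_iff] at hr
    subst hr
    simp only [map_mul, map_inv, FreeGroup.lift_apply_of, Matrix.cons_val_zero, Matrix.cons_val_one,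
      Matrix.head_cons, mul_inv_eq_one]
    exact braid_mat)

open ModularGroup in
@[simp] lemma rho_of0 : rho (of 0) = T := by simp [rho, PresentedGroup.toGroup.of]
@[simp] lemma rho_of1 : rho (of 1) = Bmat := by simp [rho, PresentedGroup.toGroup.of]

noncomputable def beta' : PresentedGroup braidRelA2 →* Multiplicative ℤ :=
  PresentedGroup.toGroup (f := ![Multiplicative.ofAdd 1, Multiplicative.ofAdd 1]) (by
    intro r hr
    rw [braidRelA2, Set.mem_singleton_iff] at hr
    subst hr
    simp only [map_mul, map_inv, FreeGroup.lift_apply_of, Matrix.cons_val_zero, Matrix.cons_val_one,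
      Matrix.head_cons, mul_inv_eq_one])

@[simp] lemma beta_of0 : beta' (of 0) = Multiplicative.ofAdd 1 := by
  simp [beta', PresentedGroup.toGroup.of]
@[simp] lemma beta_of1 : beta' (of 1) = Multiplicative.ofAdd 1 := by
  simp [beta', PresentedGroup.toGroup.of]

open UpperHalfPlane ModularGroup

lemma Umat_smul_coe (z : ℍ) : ((Umat • z : ℍ) : ℂ) = (-(z:ℂ) + 1) / (-2*(z:ℂ) + 1) := by
  rw [UpperHalfPlane.specialLinearGroup_apply, UpperHalfPlane.coe_mk]
  have h00 : (Umat : Matrix (Fin 2) (Fin 2) ℤ) 0 0 = -1 := rfl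
  have h01 : (Umat : Matrix (Fin 2) (Fin 2) ℤ) 0 1 = 1 := rfl
  have h10 : (Umat : Matrix (Fin 2) (Fin 2) ℤ) 1 0 = -2 := rfl
  have h11 : (Umat : Matrix (Fin 2) (Fin 2) ℤ) 1 1 = 1 := rfl
  rw [h00, h01, h10, h11]
  simp only [eq_intCast]
  push_cast
  ring_nf

lemma Umat_denom_ne (z : ℍ) : (-2*(z:ℂ) + 1) ≠ 0 := by
  intro h
  have him := congrArg Complex.im h
  simp only [Complex.add_im, Complex.mul_im, Complex.one_im, Complex.zero_im,
    UpperHalfPlane.coe_im] at him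
  norm_num at him
  exact absurd him (ne_of_gt z.im_pos)

lemma Umat_key (z : ℍ) : (((Umat • z : ℍ) : ℂ) - 1/2) * ((z:ℂ) - 1/2) = -(1/4) := by
  have hden := Umat_denom_ne z
  rw [Umat_smul_coe]
  rw [div_sub_div _ _ hden (by norm_num : (2:ℂ) ≠ 0), div_mul_eq_mul_div,
    div_eq_iff (by intro h; rcases mul_eq_zero.1 h with h|h; exact hden h; norm_num at h)]
  ring

/-- Ping-pong sets in the upper half plane. -/
def Xset : Bool → Set ℍ
  | false => {z | z.re < 0 ∨ 1 < z.re}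
  | true => {z | ‖(z:ℂ) - 1/2‖ < 1/2}

lemma mem_true_re {z : ℍ} (h : z ∈ Xset true) : 0 < z.re ∧ z.re < 1 := by
  have h1 : |((z:ℂ) - 1/2).re| ≤ ‖(z:ℂ) - 1/2‖ := Complex.abs_re_le_norm _
  have h2 : ((z:ℂ) - 1/2).re = z.re - 1/2 := by
    simp [Complex.sub_re, UpperHalfPlane.coe_re]
  rw [h2] at h1
  have h3 : |z.re - 1/2| < 1/2 := lt_of_le_of_lt h1 h
  rw [abs_lt] at h3
  constructor <;> linarith [h3.1, h3.2]

lemma mem_false_abs {z : ℍ} (h : z ∈ Xset false) : 1/2 < ‖(z:ℂ) - 1/2‖ := by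
  have h1 : |((z:ℂ) - 1/2).re| ≤ ‖(z:ℂ) - 1/2‖ := Complex.abs_re_le_norm _
  have h2 : ((z:ℂ) - 1/2).re = z.re - 1/2 := by
    simp [Complex.sub_re, UpperHalfPlane.coe_re]
  rw [h2] at h1
  rcases h with h | h
  · have : 1/2 < |z.re - 1/2| := by rw [abs_sub_comm, abs_of_pos (by linarith)]; linarith
    linarith
  · have : 1/2 < |z.re - 1/2| := by rw [abs_of_pos (by linarith)]; linarith
    linarith

lemma Umat_perm_sq : (MulAction.toPermHom (Matrix.SpecialLinearGroup (Fin 2) ℤ) ℍ) Umat *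
    (MulAction.toPermHom (Matrix.SpecialLinearGroup (Fin 2) ℤ) ℍ) Umat = 1 := by
  rw [← map_mul, ← pow_two]
  have hU2 : Umat ^ 2 = -1 := by
    apply Subtype.ext
    rw [pow_two, Matrix.SpecialLinearGroup.coe_mul]
    show (!![-1, 1; -2, 1] : Matrix (Fin 2) (Fin 2) ℤ) * !![-1, 1; -2, 1] = _
    rw [Matrix.mul_fin_two]
    have : ((-1 : Matrix.SpecialLinearGroup (Fin 2) ℤ) : Matrix (Fin 2) (Fin 2) ℤ)
        = -(1 : Matrix (Fin 2) (Fin 2) ℤ) := rfl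
    rw [this, Matrix.one_fin_two]
    norm_num
  rw [hU2]
  ext z
  have hz : ((-1 : Matrix.SpecialLinearGroup (Fin 2) ℤ)) • z = z := by
    rw [show (-1 : Matrix.SpecialLinearGroup (Fin 2) ℤ) = -(1 : Matrix.SpecialLinearGroup (Fin 2) ℤ) from rfl,
      ModularGroup.SL_neg_smul, one_smul]
  exact congrArg _ hz

noncomputable def fperm : (b : Bool) → Hfam b →* Equiv.Perm ℍ
  | false => (MulAction.toPermHom (Matrix.SpecialLinearGroup (Fin 2) ℤ) ℍ).comp (zpowersHom _ T)
  | true => homC2 _ Umat_perm_sq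

noncomputable def PhiW : Monoid.CoprodI Hfam →* Equiv.Perm ℍ := Monoid.CoprodI.lift fperm

lemma PhiW_inj : Function.Injective PhiW := by
  apply Monoid.CoprodI.lift_injective_of_ping_pong fperm ?_ Xset ?_ ?_ ?_
  · right
    exact ⟨false, by
      haveI : Infinite (Hfam false) := inferInstanceAs (Infinite (Multiplicative ℤ))
      exact_mod_cast (Cardinal.nat_lt_aleph0 3).le.trans (Cardinal.aleph0_le_mk (Hfam false))⟩
  · intro i
    cases i
    · exact ⟨UpperHalfPlane.mk ⟨-1, 1⟩ (by norm_num), Or.inl (by norm_num [UpperHalfPlane.coe_re])⟩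
    · refine ⟨UpperHalfPlane.mk (1/2 + Complex.I * (1/4)) (by simp), ?_⟩
      show ‖_‖ < 1/2
      rw [UpperHalfPlane.coe_mk,
        show (1/2 + Complex.I * (1/4) - 1/2 : ℂ) = Complex.I * (1/4) by ring,
        norm_mul, Complex.norm_I, one_mul,
        show ((1:ℂ)/4) = ((1/4 : ℝ) : ℂ) by norm_num, Complex.norm_real, Real.norm_eq_abs,
        abs_of_pos (by norm_num : (0:ℝ) < 1/4)]
      norm_num
  · intro i j hij
    have key : Disjoint (Xset false) (Xset true) := by
      rw [Set.disjoint_left]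
      intro z hzf hzt
      obtain ⟨h1, h2⟩ := mem_true_re hzt
      rcases hzf with h | h <;> linarith
    cases i <;> cases j
    · exact absurd rfl hij
    · exact key
    · exact key.symm
    · exact absurd rfl hij
  · intro i j hij
    cases i <;> cases j
    · exact absurd rfl hij
    · -- i = false (powers of T), j = true
      intro h hne
      rintro w ⟨z, hz, rfl⟩
      obtain ⟨h0, h1⟩ := mem_true_re hz
      set n : ℤ := Multiplicative.toAdd (h : Multiplicative ℤ) with hn
      have hperm : fperm false h • z = T ^ n • z := rfl
      have hne' : n ≠ 0 := by
        intro h0'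
        apply hne
        have : h = Multiplicative.ofAdd n := rfl
        rw [this, h0']
        rfl
      show (fperm false h) • z ∈ Xset false
      rw [hperm]
      have hre := ModularGroup.re_T_zpow_smul z n
      rcases lt_or_gt_of_ne hne' with hneg | hpos
      · left; rw [hre]
        have hcast : (n : ℝ) ≤ -1 := by exact_mod_cast (show n ≤ -1 by omega)
        linarith
      · right; rw [hre]
        have hcast : (1 : ℝ) ≤ (n : ℝ) := by exact_mod_cast (show 1 ≤ n by omega)
        linarith
    · -- i = true (U), j = false
      intro h hne
      rintro w ⟨z, hz, rfl⟩
      have habs := mem_false_abs hz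
      have hh : h = Multiplicative.ofAdd (1 : ZMod 2) := by
        revert hne
        have : ∀ g : Multiplicative (ZMod 2), g ≠ 1 → g = Multiplicative.ofAdd (1 : ZMod 2) := by
          decide
        exact this h
      subst hh
      show ‖((Umat • z : ℍ) : ℂ) - 1/2‖ < 1/2
      have hkey := Umat_key z
      have h2 : ‖((Umat • z : ℍ) : ℂ) - 1/2‖ * ‖(z:ℂ) - 1/2‖ = 1/4 := by
        rw [← norm_mul, hkey]
        simp
      have hpos : 0 < ‖(z:ℂ) - 1/2‖ := by linarith
      rw [show ‖((Umat • z : ℍ) : ℂ) - 1/2‖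
          = (1/4) / ‖(z:ℂ) - 1/2‖ by rw [eq_div_iff (ne_of_gt hpos)]; exact h2]
      rw [div_lt_iff₀ hpos]
      nlinarith
    · exact absurd rfl hij

lemma compat : PhiW.comp pp =
    (MulAction.toPermHom (Matrix.SpecialLinearGroup (Fin 2) ℤ) ℍ).comp (rho.comp phi0) := by
  apply PresentedGroup.ext
  intro x
  fin_cases x
  · show PhiW (pp (of 0)) = (MulAction.toPermHom _ ℍ) (rho (phi0 _))
    rw [pp_of0, XX, PhiW]
    show (MulAction.toPermHom _ ℍ) (T ^ (1:ℤ)) = _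
    rw [zpow_one, show ((fun i => i) (⟨0, by norm_num⟩ : Fin 2)) = (0 : Fin 2) from rfl,
      phi0_of0, rho_of0]
  · show PhiW (pp (of 1)) = (MulAction.toPermHom _ ℍ) (rho (phi0 _))
    rw [pp_of1, map_mul, map_inv, PhiW, XX, UU]
    show ((MulAction.toPermHom _ ℍ) (T ^ (1:ℤ)))⁻¹ *
      ((MulAction.toPermHom _ ℍ) Umat) ^ (ZMod.val (1 : ZMod 2)) = _
    rw [zpow_one, show ZMod.val (1 : ZMod 2) = 1 from rfl, pow_one, ← map_inv, ← map_mul,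
      show T⁻¹ * Umat = Bmat ^ 2 by rw [← Umat_eq, inv_mul_cancel_left],
      show ((fun i => i) (⟨1, by norm_num⟩ : Fin 2)) = (1 : Fin 2) from rfl,
      phi0_of1, map_pow, map_pow, rho_of1]
    exact (map_pow _ _ _).symm


/-- In `B₃ = ⟨a,b | aba = bab⟩` the subgroup generated by `a` and `b²` is
isomorphic to the Artin–Tits group `⟨x,y | xyxy = yxyx⟩` of type `B₂`, via an
(injective) homomorphism sending `x ↦ a` and `y ↦ b²`, whose image is exactly
the subgroup generated by `a` and `b²`. -/
theorem stmt_16 :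
    ∃ φ : PresentedGroup braidRelB2 →* PresentedGroup braidRelA2,
      Function.Injective φ ∧
      φ (PresentedGroup.of 0) = PresentedGroup.of 0 ∧
      φ (PresentedGroup.of 1) = (PresentedGroup.of 1 : PresentedGroup braidRelA2) ^ 2 ∧
      φ.range = Subgroup.closure
        {(PresentedGroup.of 0 : PresentedGroup braidRelA2),
          (PresentedGroup.of 1 : PresentedGroup braidRelA2) ^ 2} := by
  refine ⟨phi0, ?_, phi0_of0, phi0_of1, ?_⟩
  · rw [injective_iff_map_eq_one]
    intro g hg
    have h1 : PhiW (pp g) = 1 := by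
      have hc := DFunLike.congr_fun compat g
      simp only [MonoidHom.comp_apply] at hc
      rw [hc, hg, map_one, map_one]
    have h2 : pp g = 1 := by
      apply PhiW_inj
      rw [h1, map_one]
    have h3 : QuotientGroup.mk' NN g = 1 := by
      have hs := DFunLike.congr_fun sigma_pp g
      simp only [MonoidHom.comp_apply] at hs
      rw [← hs, h2, map_one]
    have h4 : g ∈ NN := (QuotientGroup.eq_one_iff g).1 h3
    obtain ⟨k, rfl⟩ := Subgroup.mem_zpowers_iff.1 h4
    have h5 : beta' (phi0 (cc ^ k)) = 1 := by rw [hg, map_one]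
    have h6 : beta' (phi0 cc) = Multiplicative.ofAdd (6 : ℤ) := by
      rw [cc]
      simp only [map_mul, map_pow, phi0_of0, phi0_of1, beta_of0, beta_of1]
      rw [← ofAdd_nsmul, ← ofAdd_add, ← ofAdd_add, ← ofAdd_add]
      norm_num
    rw [map_zpow, map_zpow, h6] at h5
    have h7 : k • (6:ℤ) = 0 := by
      have := congrArg Multiplicative.toAdd h5
      rw [toAdd_zpow] at this
      simpa using this
    have hk : k = 0 := by
      rw [smul_eq_mul] at h7
      omega
    rw [hk, zpow_zero]
  · rw [MonoidHom.range_eq_map, ← PresentedGroup.closure_range_of braidRelB2,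
      MonoidHom.map_closure]
    congr 1
    ext w
    simp only [Set.mem_image, Set.mem_range, Set.mem_insert_iff, Set.mem_singleton_iff]
    constructor
    · rintro ⟨v, ⟨i, rfl⟩, rfl⟩
      fin_cases i
      · left; exact phi0_of0
      · right; exact phi0_of1
    · rintro (rfl | rfl)
      · exact ⟨of 0, ⟨0, rfl⟩, phi0_of0⟩
      · exact ⟨of 1, ⟨1, rfl⟩, phi0_of1⟩
end

section
/- Let m ≥ 1, let n_1, ..., n_m ≥ 2 and w_1, ..., w_m ≥ 1 be integers, and let ℓ = ∏_{j=1}^m n_j. Consider the abelian group G presented by generators γ, τ_1, ..., τ_m with relations τ_i^{n_i} = γ^{w_i} for all i (and all generators commuting). Then G is isomorphic to the subgroup of ℤ × ∏_{i=1}^m (ℤ/n_iℤ) generated by the elements g = (ℓ, 0, ..., 0) and t_i = (w_i·ℓ/n_i, e_i), where e_i is the standard generator of the i-th factor ℤ/n_iℤ, via the map γ ↦ g, τ_i ↦ t_i. -/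
open scoped commutatorElement

/-- Relations for the abelian group presented by generators `γ` (`none`) and
`τ₁, …, τ_m` (`some i`): all generators commute, and `τᵢ^{nᵢ} = γ^{wᵢ}`. -/
def tnwRels (m : ℕ) (n w : Fin m → ℕ) : Set (FreeGroup (Option (Fin m))) :=
  {r | ∃ x y : Option (Fin m), r = ⁅FreeGroup.of x, FreeGroup.of y⁆} ∪
    {r | ∃ i : Fin m, r = FreeGroup.of (some i) ^ n i * (FreeGroup.of none ^ w i)⁻¹}

/-- The element `g = (ℓ, 0, …, 0)` of `ℤ × ∏ᵢ ℤ/nᵢℤ`, where `ℓ = ∏ nⱼ`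
(written multiplicatively). -/
def tnwG (m : ℕ) (n : Fin m → ℕ) : Multiplicative (ℤ × ((i : Fin m) → ZMod (n i))) :=
  Multiplicative.ofAdd (((∏ j, n j : ℕ) : ℤ), 0)

/-- The element `tᵢ = (wᵢ·ℓ/nᵢ, eᵢ)` of `ℤ × ∏ᵢ ℤ/nᵢℤ`, where `eᵢ` is the
standard generator of the `i`-th factor (written multiplicatively). -/
def tnwT (m : ℕ) (n w : Fin m → ℕ) (i : Fin m) :
    Multiplicative (ℤ × ((i : Fin m) → ZMod (n i))) :=
  Multiplicative.ofAdd (((w i * (∏ j, n j) / n i : ℕ) : ℤ), Pi.single i 1)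

/-!
The relations make the presented group `Γ` abelian, so every element is
`γ^a · ∏ τᵢ^{cᵢ}`. The map `γ ↦ g`, `τᵢ ↦ tᵢ` respects the relations because
`nᵢ · tᵢ = (wᵢ ℓ, nᵢ eᵢ) = wᵢ · g`. If `γ^a · ∏ τᵢ^{cᵢ}` lies in the kernel, its
`ℤ/nᵢℤ`-coordinates `cᵢ` vanish, so `nᵢ ∣ cᵢ` and the relations rewrite the element
as a power `γ^b`; since `g = (ℓ, 0)` has infinite order, `b = 0`.
-/

namespace PresentedGroup

variable {α : Type*} {rels : Set (FreeGroup α)}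

theorem of_pow_eq_of_pow_of_mem {x y : α} {k l : ℕ}
    (h : FreeGroup.of x ^ k * (FreeGroup.of y ^ l)⁻¹ ∈ rels) :
    (of x : PresentedGroup rels) ^ k = of y ^ l := by
  have := mk_eq_mk_of_mul_inv_mem h
  rwa [map_pow, map_pow] at this

theorem mul_comm_of_commutator_mem (h : ∀ x y : α, ⁅FreeGroup.of x, FreeGroup.of y⁆ ∈ rels)
    (a b : PresentedGroup rels) : a * b = b * a := by
  have hcomm : ∀ x ∈ Set.range (of (rels := rels)), ∀ y ∈ Set.range of, x * y = y * x := by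
    rintro _ ⟨x, rfl⟩ _ ⟨y, rfl⟩
    rw [← commutatorElement_eq_one_iff_mul_comm]
    have := one_of_mem (h x y)
    rwa [map_commutatorElement] at this
  have hle := Subgroup.closure_le_centralizer_centralizer (Set.range (of (rels := rels)))
  rw [closure_range_of] at hle
  exact Set.centralizer_centralizer_comm_of_comm hcomm a (hle trivial) b (hle trivial)

abbrev commGroupOfCommutatorMem (h : ∀ x y : α, ⁅FreeGroup.of x, FreeGroup.of y⁆ ∈ rels) :
    CommGroup (PresentedGroup rels) :=
  { mul_comm := mul_comm_of_commutator_mem h }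

end PresentedGroup

section TnwGroup

variable (m : ℕ) (n w : Fin m → ℕ)

open PresentedGroup

def tnwGen : Option (Fin m) → Multiplicative (ℤ × ((i : Fin m) → ZMod (n i)))
  | none => tnwG m n
  | some i => tnwT m n w i

theorem tnwT_pow (i : Fin m) : tnwT m n w i ^ n i = tnwG m n ^ w i := by
  have hdvd : n i ∣ w i * ∏ j, n j := (Finset.dvd_prod_of_mem n (Finset.mem_univ i)).mul_left _
  simp only [tnwT, tnwG, ← ofAdd_nsmul, Prod.smul_mk, nsmul_eq_mul, smul_zero,
    ← Nat.cast_mul, Nat.mul_div_cancel' hdvd, ← Pi.single_smul, mul_one, ZMod.natCast_self,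
    Pi.single_zero]

theorem tnwGen_rels : ∀ r ∈ tnwRels m n w, FreeGroup.lift (tnwGen m n w) r = 1 := by
  rintro r (⟨x, y, rfl⟩ | ⟨i, rfl⟩)
  · simp [commutatorElement_def]
  · simp [tnwGen, tnwT_pow]

def tnwHom : PresentedGroup (tnwRels m n w) →* Multiplicative (ℤ × ((i : Fin m) → ZMod (n i))) :=
  toGroup (tnwGen_rels m n w)

theorem tnwHom_of (x : Option (Fin m)) : tnwHom m n w (of x) = tnwGen m n w x :=
  toGroup.of _

theorem tnwHom_of_none : tnwHom m n w (of none) = tnwG m n :=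
  tnwHom_of m n w none

theorem tnwHom_of_some (i : Fin m) : tnwHom m n w (of (some i)) = tnwT m n w i :=
  tnwHom_of m n w (some i)

theorem range_tnwHom :
    (tnwHom m n w).range = Subgroup.closure ({tnwG m n} ∪ Set.range (tnwT m n w)) := by
  rw [MonoidHom.range_eq_map, ← closure_range_of, MonoidHom.map_closure, ← Set.range_comp,
    show tnwHom m n w ∘ of = tnwGen m n w from funext (tnwHom_of m n w), Option.range_eq]
  rfl

theorem eq_zero_of_tnwG_zpow_eq_one (hn : ∀ i, n i ≠ 0) {b : ℤ} (h : tnwG m n ^ b = 1) :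
    b = 0 := by
  have hℓ : ((∏ j, n j : ℕ) : ℤ) ≠ 0 :=
    Nat.cast_ne_zero.mpr (Finset.prod_ne_zero_iff.mpr fun j _ => hn j)
  have hb : b * ((∏ j, n j : ℕ) : ℤ) = 0 := congrArg Prod.fst (Multiplicative.ofAdd.injective h)
  exact (mul_eq_zero.mp hb).resolve_right hℓ

abbrev tnwCommGroup : CommGroup (PresentedGroup (tnwRels m n w)) :=
  commGroupOfCommutatorMem fun x y => Or.inl ⟨x, y, rfl⟩

attribute [local instance] tnwCommGroup

theorem tnw_exists_eq_of_none_zpow_mul_prod (x : PresentedGroup (tnwRels m n w)) :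
    ∃ (a : ℤ) (c : Fin m → ℤ), x = of none ^ a * ∏ i, of (some i) ^ c i := by
  obtain ⟨c, rfl⟩ := (Subgroup.mem_closure_range_iff_of_fintype (f := of)).mp
    ((closure_range_of (tnwRels m n w)).symm ▸ Subgroup.mem_top x)
  exact ⟨c none, c ∘ some, Fintype.prod_option _⟩

theorem snd_toAdd_tnwHom (a : ℤ) (c : Fin m → ℤ) :
    (tnwHom m n w (of none ^ a * ∏ i, of (some i) ^ c i)).toAdd.2 =
      fun j => (c j : ZMod (n j)) := by
  simp only [map_mul, map_zpow, map_prod, tnwHom_of_none, tnwHom_of_some, tnwG, tnwT,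
    ← ofAdd_zsmul, ← ofAdd_sum, ← ofAdd_add, toAdd_ofAdd, Prod.snd_add, Prod.smul_mk, smul_zero,
    zero_add, Prod.snd_sum, ← Pi.single_smul, zsmul_eq_mul, mul_one]
  exact Finset.univ_sum_single _

theorem tnw_of_some_zpow_mul (i : Fin m) (q : ℤ) :
    (of (some i) : PresentedGroup (tnwRels m n w)) ^ (n i * q) = of none ^ (w i * q) := by
  rw [zpow_mul, zpow_mul, zpow_natCast, zpow_natCast, of_pow_eq_of_pow_of_mem (Or.inr ⟨i, rfl⟩)]

theorem injective_tnwHom (hn : ∀ i, n i ≠ 0) : Function.Injective (tnwHom m n w) := by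
  rw [injective_iff_map_eq_one]
  intro x hx
  obtain ⟨a, c, rfl⟩ := tnw_exists_eq_of_none_zpow_mul_prod m n w x
  have hdvd (i : Fin m) : (n i : ℤ) ∣ c i := by
    rw [← ZMod.intCast_zmod_eq_zero_iff_dvd, ← congrFun (snd_toAdd_tnwHom m n w a c) i, hx]
    rfl
  choose q hq using hdvd
  have hmem (i : Fin m) :
      of (some i) ^ c i ∈ Subgroup.zpowers (of none : PresentedGroup (tnwRels m n w)) := by
    rw [hq, tnw_of_some_zpow_mul]
    exact zpow_mem (Subgroup.mem_zpowers _) _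
  obtain ⟨b, hb⟩ := Subgroup.mem_zpowers_iff.mp <|
    mul_mem (zpow_mem (Subgroup.mem_zpowers _) a) (Subgroup.prod_mem _ fun i _ => hmem i)
  rw [← hb, map_zpow, tnwHom_of_none] at hx
  rw [← hb, eq_zero_of_tnwG_zpow_eq_one m n hn hx, zpow_zero]

end TnwGroup

theorem stmt_17_general (m : ℕ) (n w : Fin m → ℕ)
    (hn : ∀ i, 2 ≤ n i) :
    ∃ φ : PresentedGroup (tnwRels m n w) →*
        Multiplicative (ℤ × ((i : Fin m) → ZMod (n i))),
      Function.Injective φ ∧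
      φ (PresentedGroup.of none) = tnwG m n ∧
      (∀ i : Fin m, φ (PresentedGroup.of (some i)) = tnwT m n w i) ∧
      φ.range = Subgroup.closure ({tnwG m n} ∪ Set.range (tnwT m n w)) :=
  ⟨tnwHom m n w, injective_tnwHom m n w fun i => (Nat.zero_lt_two.trans_le (hn i)).ne',
    tnwHom_of_none m n w, tnwHom_of_some m n w, range_tnwHom m n w⟩

/-- The abelian group `⟨γ, τ₁, …, τ_m | [·,·] = 1, τᵢ^{nᵢ} = γ^{wᵢ}⟩` is
isomorphic to the subgroup of `ℤ × ∏ᵢ ℤ/nᵢℤ` generated by `g = (ℓ,0,…,0)` and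
`tᵢ = (wᵢℓ/nᵢ, eᵢ)`, via `γ ↦ g` and `τᵢ ↦ tᵢ`. -/
theorem stmt_17 (m : ℕ) (hm : 1 ≤ m) (n w : Fin m → ℕ)
    (hn : ∀ i, 2 ≤ n i) (hw : ∀ i, 1 ≤ w i) :
    ∃ φ : PresentedGroup (tnwRels m n w) →*
        Multiplicative (ℤ × ((i : Fin m) → ZMod (n i))),
      Function.Injective φ ∧
      φ (PresentedGroup.of none) = tnwG m n ∧
      (∀ i : Fin m, φ (PresentedGroup.of (some i)) = tnwT m n w i) ∧
      φ.range = Subgroup.closure ({tnwG m n} ∪ Set.range (tnwT m n w)) :=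
  stmt_17_general m n w hn
end

section
/- The normal closure in SL(2, ℤ) of the matrix [[1, 4], [0, 1]] equals the principal congruence subgroup Γ(4) = ker(SL(2,ℤ) → SL(2, ℤ/4ℤ)), and Γ(4) is torsion-free. -/
/-- The unipotent matrix `[[1, 4], [0, 1]]` as an element of `SL(2, ℤ)`. -/
def U4 : Matrix.SpecialLinearGroup (Fin 2) ℤ :=
  ⟨!![1, 4; 0, 1], by simp [Matrix.det_fin_two_of]⟩

/-- The principal congruence subgroup `Γ(4) = ker(SL(2,ℤ) → SL(2, ℤ/4ℤ))`. -/
def Gamma4 : Subgroup (Matrix.SpecialLinearGroup (Fin 2) ℤ) :=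
  MonoidHom.ker (Matrix.SpecialLinearGroup.map (n := Fin 2) (Int.castRingHom (ZMod 4)))

/-- Old Mathlib definition (removed): a monoid is torsion-free if no nontrivial element has
finite order. -/
def Monoid.IsTorsionFree (G : Type*) [Monoid G] : Prop :=
  ∀ g : G, g ≠ 1 → ¬IsOfFinOrder g

/-!
Γ(2) is generated by `U2 = [[1,2],[0,1]]`, `L2 = [[1,0],[2,1]]` and `-1`, by a Euclidean descent on
the first column. Modulo `N = ⟨⟨U4⟩⟩` the images of `U2` and `L2` are commuting involutions, since
`U2² = U4` while `L2²` and `(U2 L2⁻¹)²` are conjugates of `U4⁻¹`, and `-1` is central. Hence every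
element of Γ(2) is `U2^i L2^j (-1)^k` modulo `N`; if it lies in Γ(4), reducing this product mod 4
forces `i`, `j`, `k` to be even, and then it lies in `N`.

For torsion-freeness, Cayley–Hamilton gives `g^(n+1) = S_n(t) g - S_(n-1)(t)` with `t = tr g` and
the Chebyshev polynomials `S_n`. On Γ(4) the trace is `2 mod 4`, so `|t| ≥ 2`, and then
`|S_n(t)|` is strictly increasing; thus `g^(n+1) = 1` forces `g` to be scalar, i.e. `±1`, and
`-1 ∉ Γ(4)`.
-/

open Polynomial ModularGroup CongruenceSubgroup
open scoped MatrixGroups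

theorem commute_of_sq_eq_one {G : Type*} [Group G] {a b : G} (ha : a ^ 2 = 1) (hb : b ^ 2 = 1)
    (hab : (a * b) ^ 2 = 1) : Commute a b := by
  rw [sq, mul_eq_one_iff_eq_inv] at ha hb hab
  rw [Commute, SemiconjBy, hab, mul_inv_rev, ← ha, ← hb]

theorem exists_zpow_mul_zpow_mul_zpow_eq_of_mem_closure {G : Type*} [Group G] {a b c : G}
    (hab : Commute a b) (hac : Commute a c) (hbc : Commute b c) {g : G}
    (hg : g ∈ Subgroup.closure {a, b, c}) : ∃ i j k : ℤ, a ^ i * b ^ j * c ^ k = g := by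
  have hmul (i j k i' j' k' : ℤ) : a ^ i * b ^ j * c ^ k * (a ^ i' * b ^ j' * c ^ k') =
      a ^ (i + i') * b ^ (j + j') * c ^ (k + k') := by
    simp only [zpow_add, mul_assoc, (hac.zpow_zpow i' k).symm.left_comm,
      (hbc.zpow_zpow j' k).symm.left_comm, (hab.zpow_zpow i' j).symm.left_comm]
  induction hg using Subgroup.closure_induction with
  | mem g hg =>
    rcases hg with rfl | rfl | rfl
    exacts [⟨1, 0, 0, by simp⟩, ⟨0, 1, 0, by simp⟩, ⟨0, 0, 1, by simp⟩]
  | one => exact ⟨0, 0, 0, by simp⟩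
  | mul g h _ _ ihg ihh =>
    obtain ⟨i, j, k, rfl⟩ := ihg
    obtain ⟨i', j', k', rfl⟩ := ihh
    exact ⟨i + i', j + j', k + k', (hmul ..).symm⟩
  | inv g _ ih =>
    obtain ⟨i, j, k, rfl⟩ := ih
    exact ⟨-i, -j, -k, eq_inv_of_mul_eq_one_left (by rw [hmul]; simp)⟩

theorem pow_succ_eq_chebyshev_S {R : Type*} [Ring R] {A : R} {t : ℤ} (h : A ^ 2 = t • A - 1)
    (n : ℕ) : A ^ (n + 1) = (Chebyshev.S ℤ n).eval t • A - (Chebyshev.S ℤ (n - 1)).eval t • 1 := by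
  induction n with
  | zero => simp
  | succ n ih =>
    rw [pow_succ, ih, Nat.cast_succ, add_sub_cancel_right, Chebyshev.S_add_one]
    simp only [eval_sub, eval_mul, eval_X, sub_mul, smul_mul_assoc, ← sq, h, one_mul]
    module

theorem abs_eval_chebyshev_S_lt {t : ℤ} (ht : 2 ≤ |t|) (n : ℕ) :
    |(Chebyshev.S ℤ (n - 1)).eval t| < |(Chebyshev.S ℤ n).eval t| := by
  induction n with
  | zero => simp
  | succ n ih =>
    rw [Nat.cast_succ, add_sub_cancel_right, Chebyshev.S_add_one, eval_sub, eval_mul, eval_X]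
    have := abs_sub_abs_le_abs_sub (t * (Chebyshev.S ℤ n).eval t) ((Chebyshev.S ℤ (n - 1)).eval t)
    rw [abs_mul] at this
    nlinarith [abs_nonneg ((Chebyshev.S ℤ n).eval t)]

theorem Matrix.sq_eq_trace_smul_sub_one {R : Type*} [CommRing R] {M : Matrix (Fin 2) (Fin 2) R}
    (h : M.det = 1) : M ^ 2 = M.trace • M - 1 := by
  rw [Matrix.det_fin_two] at h
  ext i j
  fin_cases i <;> fin_cases j <;> simp [sq, Matrix.mul_apply, Matrix.trace_fin_two] <;>
    [linear_combination -h; ring; ring; linear_combination -h]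

theorem Matrix.SpecialLinearGroup.det_fin_two_eq_one {R : Type*} [CommRing R] (A : SL(2, R)) :
    A 0 0 * A 1 1 - A 0 1 * A 1 0 = 1 := by
  rw [← Matrix.det_fin_two, A.det_coe]

theorem mem_Gamma_iff_dvd {N : ℕ} {A : SL(2, ℤ)} :
    A ∈ Γ(N) ↔ (N : ℤ) ∣ A 0 0 - 1 ∧ (N : ℤ) ∣ A 0 1 ∧ (N : ℤ) ∣ A 1 0 ∧ (N : ℤ) ∣ A 1 1 - 1 := by
  simp [← ZMod.intCast_zmod_eq_zero_iff_dvd, sub_eq_zero]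

theorem Gamma_four_le_Gamma_two : Γ(4) ≤ Γ(2) := by
  intro A hA
  simp only [mem_Gamma_iff_dvd] at hA ⊢
  omega

theorem exists_natAbs_add_two_mul_lt {a c : ℤ} (ha : a ≠ 0) (h : a.natAbs < c.natAbs) :
    ∃ k : ℤ, (c + 2 * k * a).natAbs < c.natAbs := by
  by_contra! h'
  have := h' 1
  have := h' (-1)
  omega

def U2 : SL(2, ℤ) := T ^ (2 : ℤ)

def L2 : SL(2, ℤ) := S * U2⁻¹ * S⁻¹

theorem coe_U2_zpow (k : ℤ) :
    ((U2 ^ k : SL(2, ℤ)) : Matrix (Fin 2) (Fin 2) ℤ) = !![1, 2 * k; 0, 1] := by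
  rw [U2, ← zpow_mul, coe_T_zpow]

theorem coe_L2_zpow (k : ℤ) :
    ((L2 ^ k : SL(2, ℤ)) : Matrix (Fin 2) (Fin 2) ℤ) = !![1, 0; 2 * k, 1] := by
  rw [L2, conj_zpow, inv_zpow', U2, ← zpow_mul, S_inv]
  simp [coe_T_zpow, coe_S]

theorem coe_U4 : (U4 : Matrix (Fin 2) (Fin 2) ℤ) = !![1, 4; 0, 1] := rfl

theorem U2_zpow_mul_apply (k : ℤ) (A : SL(2, ℤ)) :
    (U2 ^ k * A) 0 0 = A 0 0 + 2 * k * A 1 0 ∧ (U2 ^ k * A) 1 0 = A 1 0 := by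
  simp [Matrix.SpecialLinearGroup.coe_mul, coe_U2_zpow, Matrix.mul_apply, Fin.sum_univ_two]

theorem L2_zpow_mul_apply (k : ℤ) (A : SL(2, ℤ)) :
    (L2 ^ k * A) 0 0 = A 0 0 ∧ (L2 ^ k * A) 1 0 = A 1 0 + 2 * k * A 0 0 := by
  simp [Matrix.SpecialLinearGroup.coe_mul, coe_L2_zpow, Matrix.mul_apply, Fin.sum_univ_two]
  ring

theorem U2_mem_Gamma_two : U2 ∈ Γ(2) :=
  ModularGroup_T_pow_mem_Gamma 2 2 dvd_rfl

theorem L2_mem_Gamma_two : L2 ∈ Γ(2) := by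
  simpa [L2] using (Gamma_normal 2).conj_mem _ (inv_mem U2_mem_Gamma_two) S

theorem mem_closure_of_apply_one_zero_eq_zero {A : SL(2, ℤ)} (hA : A ∈ Γ(2)) (hc : A 1 0 = 0) :
    A ∈ Subgroup.closure {U2, L2, -1} := by
  have hU2 : U2 ∈ Subgroup.closure {U2, L2, -1} := Subgroup.subset_closure (by simp)
  have hneg : -1 ∈ Subgroup.closure {U2, L2, -1} := Subgroup.subset_closure (by simp)
  obtain ⟨m, hm⟩ : 2 ∣ A 0 1 := by exact_mod_cast (mem_Gamma_iff_dvd.mp hA).2.1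
  have had : A 0 0 * A 1 1 = 1 := by
    simpa [hc] using Matrix.SpecialLinearGroup.det_fin_two_eq_one A
  rcases Int.eq_one_or_neg_one_of_mul_eq_one' had with ⟨ha, hd⟩ | ⟨ha, hd⟩
  · convert zpow_mem hU2 m using 1
    ext i j
    fin_cases i <;> fin_cases j <;> simp [coe_U2_zpow, ha, hm, hc, hd]
  · convert mul_mem hneg (zpow_mem hU2 (-m)) using 1
    ext i j
    fin_cases i <;> fin_cases j <;> simp [coe_U2_zpow, ha, hm, hc, hd]

theorem Gamma_two_le_closure : Γ(2) ≤ Subgroup.closure {U2, L2, -1} := by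
  intro A hA
  induction hn : (A 0 0).natAbs + (A 1 0).natAbs using Nat.strong_induction_on generalizing A with
  | _ n ih =>
  set H := Subgroup.closure {U2, L2, -1}
  obtain ⟨ha, -, hc, -⟩ := mem_Gamma_iff_dvd.mp hA
  by_cases hc0 : A 1 0 = 0
  · exact mem_closure_of_apply_one_zero_eq_zero hA hc0
  -- `A 0 0` is odd and `A 1 0` is even, so their absolute values differ
  rcases lt_or_gt_of_ne (show (A 0 0).natAbs ≠ (A 1 0).natAbs by push_cast at ha hc; omega)
    with hlt | hgt
  · obtain ⟨k, hk⟩ := exists_natAbs_add_two_mul_lt (show A 0 0 ≠ 0 by push_cast at ha; omega) hlt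
    have hL : L2 ^ k ∈ H := zpow_mem (Subgroup.subset_closure (by simp)) k
    obtain ⟨h00, h10⟩ := L2_zpow_mul_apply k A
    refine (H.mul_mem_cancel_left hL).mp (ih _ ?_ (mul_mem (zpow_mem L2_mem_Gamma_two k) hA) rfl)
    rw [h00, h10]
    omega
  · obtain ⟨k, hk⟩ := exists_natAbs_add_two_mul_lt hc0 hgt
    have hU : U2 ^ k ∈ H := zpow_mem (Subgroup.subset_closure (by simp)) k
    obtain ⟨h00, h10⟩ := U2_zpow_mul_apply k A
    refine (H.mul_mem_cancel_left hU).mp (ih _ ?_ (mul_mem (zpow_mem U2_mem_Gamma_two k) hA) rfl)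
    rw [h00, h10]
    omega

theorem U2_sq : U2 ^ 2 = U4 := by
  apply Subtype.ext
  rw [← zpow_natCast, coe_U2_zpow]
  norm_num [coe_U4]

theorem L2_sq : L2 ^ 2 = S * U4⁻¹ * S⁻¹ := by
  rw [L2, conj_pow, inv_pow, U2_sq]

theorem U2_mul_L2_inv_sq : (U2 * L2⁻¹) ^ 2 = (S * T⁻¹ * S⁻¹) * U4⁻¹ * (S * T⁻¹ * S⁻¹)⁻¹ := by
  apply Subtype.ext
  simp [sq, L2, U2, coe_U4, Matrix.SpecialLinearGroup.coe_inv, Matrix.adjugate_fin_two, coe_S,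
    coe_T]

theorem U4_mem_normalClosure : U4 ∈ Subgroup.normalClosure {U4} :=
  Subgroup.subset_normalClosure (Set.mem_singleton U4)

theorem conj_U4_inv_mem_normalClosure (g : SL(2, ℤ)) :
    g * U4⁻¹ * g⁻¹ ∈ Subgroup.normalClosure {U4} :=
  Subgroup.normalClosure_normal.conj_mem _ (inv_mem U4_mem_normalClosure) g

theorem commute_U2_L2_mod_normalClosure :
    Commute (U2 : SL(2, ℤ) ⧸ Subgroup.normalClosure {U4}) L2 := by
  have hU : (U2 : SL(2, ℤ) ⧸ Subgroup.normalClosure {U4}) ^ 2 = 1 := by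
    rw [← QuotientGroup.mk_pow, U2_sq, QuotientGroup.eq_one_iff]
    exact U4_mem_normalClosure
  have hL : (L2 : SL(2, ℤ) ⧸ Subgroup.normalClosure {U4}) ^ 2 = 1 := by
    rw [← QuotientGroup.mk_pow, L2_sq, QuotientGroup.eq_one_iff]
    exact conj_U4_inv_mem_normalClosure S
  refine commute_of_sq_eq_one hU hL ?_
  rw [← inv_eq_of_mul_eq_one_right ((sq _).symm.trans hL), ← QuotientGroup.mk_inv,
    ← QuotientGroup.mk_mul, ← QuotientGroup.mk_pow, U2_mul_L2_inv_sq, QuotientGroup.eq_one_iff]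
  exact conj_U4_inv_mem_normalClosure _

theorem mem_normalClosure_of_mem_Gamma_four {i j k : ℤ}
    (h : U2 ^ i * L2 ^ j * (-1) ^ k ∈ Γ(4)) :
    U2 ^ i * L2 ^ j * (-1) ^ k ∈ Subgroup.normalClosure {U4} := by
  have hcoe : ((U2 ^ i * L2 ^ j : SL(2, ℤ)) : Matrix (Fin 2) (Fin 2) ℤ) =
      !![1 + 4 * (i * j), 2 * i; 2 * j, 1] := by
    simp [coe_U2_zpow, coe_L2_zpow]
    ring
  rcases Int.even_or_odd k with hk | hk
  · rw [hk.neg_one_zpow, mul_one] at h ⊢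
    obtain ⟨-, hb, hc, -⟩ := mem_Gamma_iff_dvd.mp h
    simp [hcoe] at hb hc
    obtain ⟨i, rfl⟩ : 2 ∣ i := by omega
    obtain ⟨j, rfl⟩ : 2 ∣ j := by omega
    rw [zpow_mul, zpow_mul, zpow_two, zpow_two, ← sq, ← sq, U2_sq, L2_sq]
    exact mul_mem (zpow_mem U4_mem_normalClosure _) (zpow_mem (conj_U4_inv_mem_normalClosure S) _)
  · rw [hk.neg_one_zpow, mul_neg_one] at h
    obtain ⟨ha, -⟩ := mem_Gamma_iff_dvd.mp h
    simp [Matrix.SpecialLinearGroup.coe_neg, hcoe] at ha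
    generalize i * j = t at ha
    omega

theorem normalClosure_U4_le_Gamma_four : Subgroup.normalClosure {U4} ≤ Γ(4) :=
  have := Gamma_normal 4
  Subgroup.normalClosure_le_normal
    (Set.singleton_subset_iff.mpr (mem_Gamma_iff_dvd.mpr (by norm_num [coe_U4])))

theorem Gamma_four_le_normalClosure : Γ(4) ≤ Subgroup.normalClosure {U4} := by
  intro g hg
  set N := Subgroup.normalClosure {U4}
  have hgH :
      (g : SL(2, ℤ) ⧸ N) ∈ Subgroup.closure {(U2 : SL(2, ℤ) ⧸ N), ↑L2, ↑(-1 : SL(2, ℤ))} := by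
    have := Subgroup.mem_map_of_mem (QuotientGroup.mk' N)
      (Gamma_two_le_closure (Gamma_four_le_Gamma_two hg))
    simpa [MonoidHom.map_closure, Set.image_insert_eq] using this
  obtain ⟨i, j, k, hijk⟩ := exists_zpow_mul_zpow_mul_zpow_eq_of_mem_closure
    commute_U2_L2_mod_normalClosure ((Commute.neg_one_right U2).map (QuotientGroup.mk' N))
    ((Commute.neg_one_right L2).map (QuotientGroup.mk' N)) hgH
  set u := U2 ^ i * L2 ^ j * (-1) ^ k
  have hu : u⁻¹ * g ∈ N := QuotientGroup.eq.mp (by simpa [u] using hijk)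
  have huΓ : u ∈ Γ(4) := by
    simpa using mul_mem hg (inv_mem (normalClosure_U4_le_Gamma_four hu))
  have huN : u ∈ N := mem_normalClosure_of_mem_Gamma_four huΓ
  simpa only [mul_inv_cancel_left] using mul_mem huN hu

theorem eq_one_or_eq_neg_one_of_isOfFinOrder {g : SL(2, ℤ)}
    (ht : 2 ≤ |(g : Matrix (Fin 2) (Fin 2) ℤ).trace|) (hg : IsOfFinOrder g) : g = 1 ∨ g = -1 := by
  obtain ⟨_ | m, hm, hgm⟩ := isOfFinOrder_iff_pow_eq_one.mp hg
  · omega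
  set s := (Chebyshev.S ℤ m).eval (g : Matrix (Fin 2) (Fin 2) ℤ).trace
  set r := (Chebyshev.S ℤ (m - 1)).eval (g : Matrix (Fin 2) (Fin 2) ℤ).trace
  have hs : s ≠ 0 := abs_pos.mp ((abs_nonneg r).trans_lt (abs_eval_chebyshev_S_lt ht m))
  have hsg : s • (g : Matrix (Fin 2) (Fin 2) ℤ) = (1 + r) • 1 := by
    have := congrArg (fun h : SL(2, ℤ) ↦ (h : Matrix (Fin 2) (Fin 2) ℤ)) hgm
    simp only [Matrix.SpecialLinearGroup.coe_pow, Matrix.SpecialLinearGroup.coe_one,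
      pow_succ_eq_chebyshev_S (Matrix.sq_eq_trace_smul_sub_one g.det_coe)] at this
    rw [add_smul, one_smul]
    exact sub_eq_iff_eq_add.mp this
  have hcomm (h : Matrix (Fin 2) (Fin 2) ℤ) : h * g = g * h := by
    refine smul_right_injective _ hs ?_
    dsimp only
    rw [← mul_smul_comm, ← smul_mul_assoc, hsg, mul_smul_comm, smul_mul_assoc, mul_one, one_mul]
  have hcenter : g ∈ Subgroup.center SL(2, ℤ) :=
    Subgroup.mem_center_iff.mpr fun h ↦ Subtype.ext (hcomm h)
  obtain ⟨a, ha, hag⟩ := Matrix.SpecialLinearGroup.mem_center_iff.mp hcenter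
  rcases mul_self_eq_one_iff.mp (by simpa [sq] using ha) with rfl | rfl
  · exact Or.inl (Subtype.ext (by simpa using hag.symm))
  · exact Or.inr (Subtype.ext (by simpa using hag.symm))

theorem isTorsionFree_Gamma_four : Monoid.IsTorsionFree Γ(4) := by
  intro g hg1 hg
  obtain ⟨ha, -, -, hd⟩ := mem_Gamma_iff_dvd.mp g.2
  have ht : 2 ≤ |((g : SL(2, ℤ)) : Matrix (Fin 2) (Fin 2) ℤ).trace| := by
    rw [Matrix.trace_fin_two, le_abs']
    push_cast at ha hd
    omega
  rcases eq_one_or_eq_neg_one_of_isOfFinOrder ht (Γ(4).subtype.isOfFinOrder hg) with h | h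
  · exact hg1 (Subtype.ext h)
  · have := g.2
    rw [show (g : SL(2, ℤ)) = -1 from h, mem_Gamma_iff_dvd] at this
    norm_num at this

/-- The normal closure in `SL(2, ℤ)` of `[[1,4],[0,1]]` equals the principal
congruence subgroup `Γ(4)`, and `Γ(4)` is torsion-free. -/
theorem stmt_19 :
    Subgroup.normalClosure {U4} = Gamma4 ∧ Monoid.IsTorsionFree Gamma4 :=
  ⟨le_antisymm normalClosure_U4_le_Gamma_four Gamma_four_le_normalClosure,
    isTorsionFree_Gamma_four⟩
end
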